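/- Let n−k ≤ h ≤ n−2, 2 ≤ k ≤ n−1, X the set of k-arrangements of {1,...,n} ending in 1,2,...,(n−1−h), and T the set of neighbors of X in S_{n,k} − X. Then every vertex of S_{n,k} outside X ∪ T has at most one neighbor in T. -/

import Mathlib

/-!
Write `X` for the pattern set and `τ i` for the symbol it prescribes at a pattern position
`i`. A vertex `t ∈ T` is the swap of a vertex of `X` at some pattern position `i`: it follows
the pattern except at `i` and carries `τ i` in front. A neighbour `w ∉ X` of `t` agrees with
`t` at `i`. If `w` had two such neighbours, swapped at `i₁ ≠ i₂`, then `t₂ i₁ = τ i₁` and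
`t₁ i₂ = τ i₂` would both be the front symbol of `w`. Hence all neighbours of `w` in `T` have
the same front symbol, and a neighbour of `w` is determined by its front symbol.
-/

open SimpleGraph

/-- `q` is a swap-neighbor of `p` in the (n,k)-star graph: it is obtained from `p`
by swapping the first digit with the `i`-th digit for some `i ≠ 0`. -/
def swapAdj {n k : ℕ} [NeZero k] (p q : Fin k ↪ Fin n) : Prop :=
  ∃ i : Fin k, i ≠ 0 ∧ q 0 = p i ∧ q i = p 0 ∧
    ∀ j : Fin k, j ≠ 0 → j ≠ i → q j = p j

/-- `q` is an unswap-neighbor of `p`: obtained by replacing the first digit of `p`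
by a symbol not occurring in `p`. -/
def unswapAdj {n k : ℕ} [NeZero k] (p q : Fin k ↪ Fin n) : Prop :=
  (∀ j : Fin k, j ≠ 0 → q j = p j) ∧ ∀ j : Fin k, q 0 ≠ p j

/-- The (n,k)-star graph `S_{n,k}` on the k-arrangements of an n-set. -/
def nkStar (n k : ℕ) [NeZero k] : SimpleGraph (Fin k ↪ Fin n) :=
  SimpleGraph.fromRel (fun p q => swapAdj p q ∨ unswapAdj p q)

/-- The n-dimensional star graph `S_n` on permutations, adjacency by swapping the
first digit with the `i`-th digit, `i ≠ 0`. -/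
def starGraph (n : ℕ) [NeZero n] : SimpleGraph (Equiv.Perm (Fin n)) :=
  SimpleGraph.fromRel (fun p q => ∃ i : Fin n, i ≠ 0 ∧ q = p * Equiv.swap 0 i)

/-- `T` is an h-vertex-cut: `G - T` is disconnected and has minimum degree at least `h`. -/
def IsHVertexCut {V : Type*} (G : SimpleGraph V) (h : ℕ) (T : Set V) : Prop :=
  ¬ (G.induce Tᶜ).Connected ∧ ∀ v, v ∉ T → h ≤ (G.neighborSet v \ T).ncard

/-- The h-super connectivity `κ_s^{(h)}(G)`. -/
noncomputable def kappaS {V : Type*} (G : SimpleGraph V) (h : ℕ) : ℕ :=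
  sInf {m | ∃ T : Set V, IsHVertexCut G h T ∧ T.ncard = m}

/-- `F` is an h-edge-cut: `G - F` is disconnected and has minimum degree at least `h`. -/
def IsHEdgeCut {V : Type*} (G : SimpleGraph V) (h : ℕ) (F : Set (Sym2 V)) : Prop :=
  F ⊆ G.edgeSet ∧ ¬ (G.deleteEdges F).Connected ∧
    ∀ v : V, h ≤ ((G.deleteEdges F).neighborSet v).ncard

/-- The h-super edge-connectivity `λ_s^{(h)}(G)`. -/
noncomputable def lambdaS {V : Type*} (G : SimpleGraph V) (h : ℕ) : ℕ :=
  sInf {m | ∃ F : Set (Sym2 V), IsHEdgeCut G h F ∧ F.ncard = m}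

/-- `G'` together with the projection `π` is a `t`-split graph of `G`: fibers of `π`
have size `t` and are independent, `π` is a graph homomorphism, and over each edge of
`G` the edges of `G'` form a perfect matching between the two fibers. -/
structure IsSplitGraph {V W : Type*} (G : SimpleGraph V) (t : ℕ)
    (G' : SimpleGraph W) (π : W → V) : Prop where
  fiber_card : ∀ v : V, Nat.card (π ⁻¹' {v}) = t
  indep : ∀ x y : W, π x = π y → ¬ G'.Adj x y
  adj_map : ∀ x y : W, G'.Adj x y → G.Adj (π x) (π y)
  matching : ∀ (x : W) (v : V), G.Adj (π x) v → ∃! z : W, π z = v ∧ G'.Adj x z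

/-- The prefix map sending a permutation of `{1,...,n}` to its length-`k` prefix. -/
def prefixMap (n k : ℕ) (hkn : k ≤ n) (p : Equiv.Perm (Fin n)) : Fin k ↪ Fin n :=
  (Fin.castLEEmb hkn).trans p.toEmbedding

/-- The set `X` of k-arrangements whose last `n-1-h` digits are `1,2,...,n-1-h` in order. -/
def lastFixed (n k h : ℕ) : Set (Fin k ↪ Fin n) :=
  {u | ∀ i : Fin k, k - (n - 1 - h) ≤ i.val → (u i).val = i.val - (k - (n - 1 - h))}


def outerBoundary {V : Type*} (G : SimpleGraph V) (X : Set V) : Set V :=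
  {v | v ∉ X ∧ ∃ u ∈ X, G.Adj u v}

/-- Symbols are compared as natural numbers so that `lastFixed` is an instance by `rfl`. -/
def fixedPattern {n k : ℕ} (P : Fin k → Prop) (τ : Fin k → ℕ) : Set (Fin k ↪ Fin n) :=
  {u | ∀ i, P i → (u i : ℕ) = τ i}

section Star

variable {n k : ℕ} [NeZero k]

theorem apply_eq_or_of_swapAdj_or_unswapAdj {p q : Fin k ↪ Fin n}
    (hpq : swapAdj p q ∨ unswapAdj p q) {j : Fin k} (hj : j ≠ 0) :
    q j = p j ∨ (q j = p 0 ∧ p j = q 0) := by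
  rcases hpq with ⟨i, -, hq0, hqi, hrest⟩ | ⟨hrest, -⟩
  · by_cases hji : j = i
    · subst hji
      exact .inr ⟨hqi, hq0.symm⟩
    · exact .inl (hrest j hj hji)
  · exact .inl (hrest j hj)

theorem nkStar.apply_eq_or_of_adj {p q : Fin k ↪ Fin n} (hpq : (nkStar n k).Adj p q)
    {j : Fin k} (hj : j ≠ 0) : q j = p j ∨ (q j = p 0 ∧ p j = q 0) := by
  rw [nkStar, fromRel_adj] at hpq
  rcases hpq.2 with h | h
  · exact apply_eq_or_of_swapAdj_or_unswapAdj h hj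
  · rcases apply_eq_or_of_swapAdj_or_unswapAdj h hj with e | ⟨e₁, e₂⟩
    · exact .inl e.symm
    · exact .inr ⟨e₂, e₁⟩

theorem nkStar.eq_of_adj_of_apply_zero_eq {p q r : Fin k ↪ Fin n}
    (hq : (nkStar n k).Adj p q) (hr : (nkStar n k).Adj p r) (h0 : q 0 = r 0) : q = r := by
  refine DFunLike.ext q r fun j => ?_
  by_cases hj : j = 0
  · subst hj
    exact h0
  rcases apply_eq_or_of_adj hq hj with hqj | ⟨hqj, hpj⟩ <;>
    rcases apply_eq_or_of_adj hr hj with hrj | ⟨hrj, hpj'⟩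
  · rw [hqj, hrj]
  · exact absurd (q.injective (hqj.trans (hpj'.trans h0.symm))) hj
  · exact absurd (r.injective (hrj.trans (hpj.trans h0))) hj
  · rw [hqj, hrj]

theorem nkStar.apply_eq_of_adj_of_apply_eq_apply_zero {p q : Fin k ↪ Fin n}
    (hpq : (nkStar n k).Adj p q) {i j : Fin k} (hj : j ≠ 0) (hji : j ≠ i) (hpi : p i = q 0) :
    q j = p j := by
  rcases apply_eq_or_of_adj hpq hj with hqj | ⟨-, hpj⟩
  · exact hqj
  · exact absurd (p.injective (hpj.trans hpi.symm)) hji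

end Star

section Pattern

variable {n k : ℕ} [NeZero k] {P : Fin k → Prop} {τ : Fin k → ℕ}

/-- `t` arises from an arrangement of `fixedPattern P τ` by swapping its front symbol with
the one at position `i`. -/
def IsSwapOfPattern (P : Fin k → Prop) (τ : Fin k → ℕ) (t : Fin k ↪ Fin n) (i : Fin k) :
    Prop :=
  P i ∧ (t 0 : ℕ) = τ i ∧ ∀ j, P j → j ≠ i → (t j : ℕ) = τ j

theorem IsSwapOfPattern.ne_zero (hP0 : ¬ P 0) {t : Fin k ↪ Fin n} {i : Fin k}
    (ht : IsSwapOfPattern P τ t i) : i ≠ 0 := by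
  rintro rfl
  exact hP0 ht.1

theorem exists_isSwapOfPattern_of_mem_outerBoundary (hP0 : ¬ P 0) {t : Fin k ↪ Fin n}
    (ht : t ∈ outerBoundary (nkStar n k) (fixedPattern P τ)) :
    ∃ i, IsSwapOfPattern P τ t i := by
  obtain ⟨htX, u, hu, hut⟩ := ht
  have hne0 : ∀ j, P j → j ≠ 0 := fun j hj e => hP0 (e ▸ hj)
  obtain ⟨i, hi, hti⟩ : ∃ i, P i ∧ (t i : ℕ) ≠ τ i := by
    simpa [fixedPattern] using htX
  rcases nkStar.apply_eq_or_of_adj hut (hne0 i hi) with e | ⟨-, hui⟩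
  · exact absurd (e ▸ hu i hi) hti
  refine ⟨i, ⟨hi, ?_, fun j hj hji => ?_⟩⟩
  · rw [← hui]
    exact hu i hi
  · rw [nkStar.apply_eq_of_adj_of_apply_eq_apply_zero hut (hne0 j hj) hji hui]
    exact hu j hj

/-- If `w` had received the front symbol of `t` at position `i`, then `w` would lie in the
pattern. -/
theorem IsSwapOfPattern.apply_eq_of_adj (hP0 : ¬ P 0) {t w : Fin k ↪ Fin n} {i : Fin k}
    (ht : IsSwapOfPattern P τ t i) (hwt : (nkStar n k).Adj w t)
    (hw : w ∉ fixedPattern P τ) : t i = w i := by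
  rcases nkStar.apply_eq_or_of_adj hwt (ht.ne_zero hP0) with e | ⟨-, hwi⟩
  · exact e
  refine absurd (fun j hj => ?_) hw
  by_cases hji : j = i
  · subst hji
    rw [hwi]
    exact ht.2.1
  · rw [← nkStar.apply_eq_of_adj_of_apply_eq_apply_zero hwt (fun e => hP0 (e ▸ hj)) hji hwi]
    exact ht.2.2 j hj hji

theorem IsSwapOfPattern.apply_eq_apply_zero_of_adj (hP0 : ¬ P 0)
    {t₁ t₂ w : Fin k ↪ Fin n} {i₁ i₂ : Fin k} (h₁ : IsSwapOfPattern P τ t₁ i₁)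
    (h₂ : IsSwapOfPattern P τ t₂ i₂) (hne : i₁ ≠ i₂) (hw₁ : (nkStar n k).Adj w t₁)
    (hw₂ : (nkStar n k).Adj w t₂) (hw : w ∉ fixedPattern P τ) : t₂ i₁ = w 0 := by
  rcases nkStar.apply_eq_or_of_adj hw₂ (h₁.ne_zero hP0) with e | ⟨e, -⟩
  · refine absurd (t₁.injective (Fin.ext ?_)) (h₁.ne_zero hP0)
    rw [h₁.apply_eq_of_adj hP0 hw₁ hw, ← e, h₂.2.2 i₁ h₁.1 hne, h₁.2.1]
  · exact e

theorem IsSwapOfPattern.eq_of_adj (hP0 : ¬ P 0)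
    (hτ : Set.InjOn τ {i | P i}) {t₁ t₂ w : Fin k ↪ Fin n} {i₁ i₂ : Fin k}
    (h₁ : IsSwapOfPattern P τ t₁ i₁) (h₂ : IsSwapOfPattern P τ t₂ i₂)
    (hw₁ : (nkStar n k).Adj w t₁) (hw₂ : (nkStar n k).Adj w t₂)
    (hw : w ∉ fixedPattern P τ) : i₁ = i₂ := by
  by_contra hne
  apply hne (hτ h₁.1 h₂.1 _)
  calc τ i₁ = t₂ i₁ := (h₂.2.2 i₁ h₁.1 hne).symm
    _ = t₁ i₂ := by
      rw [h₁.apply_eq_apply_zero_of_adj hP0 h₂ hne hw₁ hw₂ hw,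
        h₂.apply_eq_apply_zero_of_adj hP0 h₁ (Ne.symm hne) hw₂ hw₁ hw]
    _ = τ i₂ := h₁.2.2 i₂ h₂.1 (Ne.symm hne)

theorem subsingleton_neighborSet_inter_outerBoundary_fixedPattern (hP0 : ¬ P 0)
    (hτ : Set.InjOn τ {i | P i}) {w : Fin k ↪ Fin n}
    (hw : w ∉ fixedPattern P τ) :
    ((nkStar n k).neighborSet w ∩ outerBoundary (nkStar n k) (fixedPattern P τ)).Subsingleton := by
  rintro t₁ ⟨hw₁, ht₁⟩ t₂ ⟨hw₂, ht₂⟩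
  obtain ⟨i₁, h₁⟩ := exists_isSwapOfPattern_of_mem_outerBoundary hP0 ht₁
  obtain ⟨i₂, h₂⟩ := exists_isSwapOfPattern_of_mem_outerBoundary hP0 ht₂
  obtain rfl := h₁.eq_of_adj hP0 hτ h₂ hw₁ hw₂ hw
  exact nkStar.eq_of_adj_of_apply_zero_eq hw₁ hw₂ (Fin.ext (h₁.2.1.trans h₂.2.1.symm))

end Pattern

/-- every vertex outside `X ∪ T` has at most one neighbor in `T`,
where `T` is the set of neighbors of `X` outside `X`. -/
theorem at_most_one_neighbor_in_T (n k h : ℕ) (hk2 : 2 ≤ k)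
    (h1 : n - k ≤ h) :
    ∀ w : Fin k ↪ Fin n, w ∉ lastFixed n k h →
      w ∉ {v | v ∉ lastFixed n k h ∧
              ∃ u ∈ lastFixed n k h, (@nkStar n k ⟨by omega⟩).Adj u v} →
      ((@nkStar n k ⟨by omega⟩).neighborSet w ∩
          {v | v ∉ lastFixed n k h ∧
              ∃ u ∈ lastFixed n k h, (@nkStar n k ⟨by omega⟩).Adj u v}).ncard ≤ 1 := by
  have : NeZero k := ⟨by omega⟩
  intro w hw _
  have hP0 : ¬ k - (n - 1 - h) ≤ (0 : Fin k).val := by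
    rw [Fin.val_zero]
    omega
  exact Set.ncard_le_one_iff_subsingleton.mpr
    (subsingleton_neighborSet_inter_outerBoundary_fixedPattern hP0
      (fun i hi j hj e => Fin.ext (by simp only [Set.mem_ofPred_eq] at hi hj e; omega)) hw)
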